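/- Let a, p, k ∈ ℂ and let I ⊆ F be the two-sided ideal generated by the three elements x₂x₁ − x₁x₂ − a x₁², x₃x₁ − x₁x₃ − p x₁², and x₃x₂ − x₂x₃ + a x₁x₃ − p x₁x₂ + (k + pa) x₁². Then the images in F/I of the monomials x₁^{a₁} x₂^{a₂} x₃^{a₃}, over all a₁, a₂, a₃ ∈ ℕ, form a ℂ-basis of F/I. (This quotient is the Nichols algebra associated to the braiding of type R_{1,6} with t = 1; it has Gelfand–Kirillov dimension 3.) -/

import Mathlib

/-- The free associative unital `ℂ`-algebra on three generators. -/
abbrev F : Type := FreeAlgebra ℂ (Fin 3)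

/-- The generators `x₁ = X 0`, `x₂ = X 1`, `x₃ = X 2`. -/
noncomputable def X (i : Fin 3) : F := FreeAlgebra.ι ℂ i

/-- Generators: `x₂x₁ − x₁x₂ − a x₁²`, `x₃x₁ − x₁x₃ − p x₁²`, `x₃x₂ − x₂x₃ + a x₁x₃ − p x₁x₂ + (k + pa) x₁²`. -/
noncomputable def S (a p k : ℂ) : Set F :=
  {X 1 * X 0 - X 0 * X 1 - a • (X 0 * X 0),
   X 2 * X 0 - X 0 * X 2 - p • (X 0 * X 0),
   X 2 * X 1 - X 1 * X 2 + a • (X 0 * X 2) - p • (X 0 * X 1) + (k + p * a) • (X 0 * X 0)}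

/-- The relation whose two-sided-ideal closure is the ideal generated by `S`;
`RingQuot rel` is the quotient `F/I`. -/
def rel (a p k : ℂ) : F → F → Prop := fun x y => x ∈ S a p k ∧ y = 0

/-!
Write `x, y, z` for the images of `x₁, x₂, x₃`. The relations rewrite `y x`, `z x`, `z y` as
combinations of words in which the letters are ordered, so the span of the ordered monomials
`x^i y^j z^l` is stable under left multiplication by the generators; it contains `1`, hence it is
everything. For independence, the same rewriting, performed on formal normal forms, defines
left multiplication by `x, y, z` on the free module with basis `ℕ³`; these operators satisfy the
relations, so `F/I` acts on that module, and the monomial `x^i y^j z^l` sends the basis vector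
`(0, 0, 0)` to the basis vector `(i, j, l)`.
-/

section

variable {R A : Type*} [CommRing R] [Ring A] [Algebra R A]

lemma mul_pow_eq_pow_mul_add_smul {b x : A} {c : R} (h : b * x = x * b + c • (x * x)) (n : ℕ) :
    b * x ^ n = x ^ n * b + (n * c) • x ^ (n + 1) := by
  induction n with
  | zero => simp
  | succ n ih =>
    calc b * x ^ (n + 1)
      _ = (x ^ n * b + (n * c) • x ^ (n + 1)) * x := by rw [← ih, mul_assoc, ← pow_succ]
      _ = x ^ n * (b * x) + (n * c) • x ^ (n + 2) := by
        rw [add_mul, mul_assoc, smul_mul_assoc, ← pow_succ]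
      _ = x ^ (n + 1) * b + ((n + 1 : ℕ) * c) • x ^ (n + 2) := by
        rw [h, mul_add, ← mul_assoc, ← pow_succ, mul_smul_comm, ← mul_assoc, ← pow_succ,
          ← pow_succ]
        push_cast
        module

end

namespace R16

section Spanning

variable {R A : Type*} [CommRing R] [Ring A] [Algebra R A]

structure Relations (a p k : R) (x y z : A) : Prop where
  y_mul_x : y * x = x * y + a • (x * x)
  z_mul_x : z * x = x * z + p • (x * x)
  z_mul_y : z * y = y * z - a • (x * z) + p • (x * y) - (k + p * a) • (x * x)

variable (R) in
def monomialSpan (x y z : A) : Submodule R A :=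
  Submodule.span R (Set.range fun t : ℕ × ℕ × ℕ => x ^ t.1 * y ^ t.2.1 * z ^ t.2.2)

variable {x y z : A}

lemma monomial_mem_monomialSpan (i j l : ℕ) : x ^ i * y ^ j * z ^ l ∈ monomialSpan R x y z :=
  Submodule.subset_span ⟨(i, j, l), rfl⟩

lemma mul_mem_monomialSpan_of_forall {u : A}
    (h : ∀ i j l, u * (x ^ i * y ^ j * z ^ l) ∈ monomialSpan R x y z) {m : A}
    (hm : m ∈ monomialSpan R x y z) : u * m ∈ monomialSpan R x y z := by
  induction hm using Submodule.span_induction with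
  | mem _ hm => obtain ⟨⟨i, j, l⟩, rfl⟩ := hm; exact h i j l
  | zero => simp
  | add _ _ _ _ h₁ h₂ => rw [mul_add]; exact add_mem h₁ h₂
  | smul c _ _ h => rw [mul_smul_comm]; exact Submodule.smul_mem _ c h

lemma x_pow_mul_mem_monomialSpan (n : ℕ) {m : A} (hm : m ∈ monomialSpan R x y z) :
    x ^ n * m ∈ monomialSpan R x y z := by
  refine mul_mem_monomialSpan_of_forall (fun i j l => ?_) hm
  rw [← mul_assoc, ← mul_assoc, ← pow_add]
  exact monomial_mem_monomialSpan _ _ _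

variable {a p k : R} (hr : Relations a p k x y z)
include hr

lemma y_mul_mem_monomialSpan {m : A} (hm : m ∈ monomialSpan R x y z) :
    y * m ∈ monomialSpan R x y z := by
  refine mul_mem_monomialSpan_of_forall (fun i j l => ?_) hm
  rw [← mul_assoc, ← mul_assoc, mul_pow_eq_pow_mul_add_smul hr.y_mul_x, add_mul, add_mul,
    mul_assoc (x ^ i), ← pow_succ', smul_mul_assoc, smul_mul_assoc]
  exact add_mem (monomial_mem_monomialSpan _ _ _)
    (Submodule.smul_mem _ _ (monomial_mem_monomialSpan _ _ _))

lemma z_mul_y_pow_mul_z_pow_mem_monomialSpan (j l : ℕ) :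
    z * (y ^ j * z ^ l) ∈ monomialSpan R x y z := by
  have hyz : ∀ j l, y ^ j * z ^ l ∈ monomialSpan R x y z := fun j l => by
    simpa using monomial_mem_monomialSpan (R := R) (x := x) 0 j l
  induction j generalizing l with
  | zero => simpa [← pow_succ'] using hyz 0 (l + 1)
  | succ j ih =>
    have hx := x_pow_mul_mem_monomialSpan 1 (ih l)
    have hy := y_mul_mem_monomialSpan hr (ih l)
    have hxy := x_pow_mul_mem_monomialSpan 1 (y_mul_mem_monomialSpan hr (hyz j l))
    have hxx := x_pow_mul_mem_monomialSpan 1 (x_pow_mul_mem_monomialSpan 1 (hyz j l))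
    simp only [pow_one] at hx hxy hxx
    rw [pow_succ', mul_assoc, ← mul_assoc, hr.z_mul_y]
    simp only [sub_mul, add_mul, smul_mul_assoc, mul_assoc]
    exact sub_mem (add_mem (sub_mem hy (Submodule.smul_mem _ _ hx)) (Submodule.smul_mem _ _ hxy))
      (Submodule.smul_mem _ _ hxx)

lemma z_mul_mem_monomialSpan {m : A} (hm : m ∈ monomialSpan R x y z) :
    z * m ∈ monomialSpan R x y z := by
  refine mul_mem_monomialSpan_of_forall (fun i j l => ?_) hm
  rw [mul_assoc, ← mul_assoc, mul_pow_eq_pow_mul_add_smul hr.z_mul_x, add_mul, mul_assoc,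
    smul_mul_assoc, ← mul_assoc (x ^ (i + 1))]
  exact add_mem (x_pow_mul_mem_monomialSpan i (z_mul_y_pow_mul_z_pow_mem_monomialSpan hr j l))
    (Submodule.smul_mem _ _ (monomial_mem_monomialSpan _ _ _))

lemma adjoin_le_monomialSpan :
    Subalgebra.toSubmodule (Algebra.adjoin R {x, y, z}) ≤ monomialSpan R x y z := by
  intro u hu
  suffices ∀ m ∈ monomialSpan R x y z, u * m ∈ monomialSpan R x y z by
    simpa using this 1 (by simpa using monomial_mem_monomialSpan (R := R) (x := x) (y := y) 0 0 0)
  induction hu using Algebra.adjoin_induction with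
  | mem u hu =>
    rcases hu with rfl | rfl | rfl
    · simpa using fun m => x_pow_mul_mem_monomialSpan 1 (m := m)
    · exact fun m => y_mul_mem_monomialSpan hr
    · exact fun m => z_mul_mem_monomialSpan hr
  | algebraMap c => exact fun m hm => by rw [← Algebra.smul_def]; exact Submodule.smul_mem _ c hm
  | add u v _ _ hu hv => exact fun m hm => by rw [add_mul]; exact add_mem (hu m hm) (hv m hm)
  | mul u v _ _ hu hv => exact fun m hm => by rw [mul_assoc]; exact hu _ (hv m hm)

end Spanning

noncomputable section

namespace NormalForm

variable (R : Type*) [CommRing R]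

abbrev Space : Type _ := (ℕ × ℕ × ℕ) →₀ R

/-- The normal form of the ordered monomial `x^i y^j z^l`. -/
def basisVec (i j l : ℕ) : Space R := Finsupp.single (i, j, l) 1

def shift (n : ℕ) : Space R →ₗ[R] Space R :=
  Finsupp.lmapDomain R R fun t => (t.1 + n, t.2.1, t.2.2)

def mulX : Space R →ₗ[R] Space R := shift R 1

variable {R}

lemma hom_ext {f g : Space R →ₗ[R] Space R}
    (h : ∀ i j l, f (basisVec R i j l) = g (basisVec R i j l)) : f = g :=
  Finsupp.lhom_ext' fun ⟨i, j, l⟩ => LinearMap.ext_ring (h i j l)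

@[simp]
lemma shift_basisVec (n i j l : ℕ) : shift R n (basisVec R i j l) = basisVec R (i + n) j l := by
  simp [shift, basisVec]

lemma shift_shift (m n : ℕ) (v : Space R) : shift R m (shift R n v) = shift R (n + m) v := by
  rw [← LinearMap.comp_apply]
  congr 1
  exact hom_ext fun i j l => by simp [add_assoc]

lemma mulX_pow_basisVec (n i j l : ℕ) :
    (mulX R ^ n) (basisVec R i j l) = basisVec R (i + n) j l := by
  induction n with
  | zero => simp
  | succ n ih => rw [pow_succ', Module.End.mul_apply, ih, mulX, shift_basisVec, add_assoc]

variable (a p k : R)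

def mulY : Space R →ₗ[R] Space R :=
  Finsupp.linearCombination R fun t =>
    basisVec R t.1 (t.2.1 + 1) t.2.2 + (t.1 * a) • basisVec R (t.1 + 1) t.2.1 t.2.2

lemma mulY_basisVec (i j l : ℕ) :
    mulY a (basisVec R i j l) = basisVec R i (j + 1) l + (i * a) • basisVec R (i + 1) j l := by
  simp [mulY, basisVec]

lemma mulY_shift (n : ℕ) (v : Space R) :
    mulY a (shift R n v) = shift R n (mulY a v) + (n * a) • shift R (n + 1) v := by
  have : mulY a ∘ₗ shift R n = shift R n ∘ₗ mulY a + (n * a) • shift R (n + 1) :=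
    hom_ext fun i j l => by
      simp only [LinearMap.comp_apply, LinearMap.add_apply, LinearMap.smul_apply, shift_basisVec,
        mulY_basisVec, map_add, map_smul]
      push_cast
      simp only [add_comm, add_left_comm]
      module
  exact LinearMap.congr_fun this v

lemma mulY_pow_basisVec (n j l : ℕ) :
    (mulY a ^ n) (basisVec R 0 j l) = basisVec R 0 (j + n) l := by
  induction n with
  | zero => simp
  | succ n ih => simp [pow_succ', ih, mulY_basisVec, add_assoc]

/-- The normal form of `z y^j z^l`; the recursion rewrites the leading `z y` by the third
relation. -/
def zMulNormal : ℕ → ℕ → Space R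
  | 0, l => basisVec R 0 0 (l + 1)
  | j + 1, l => mulY a (zMulNormal j l) - a • mulX R (zMulNormal j l)
      + p • basisVec R 1 (j + 1) l - (k + p * a) • basisVec R 2 j l

def mulZ : Space R →ₗ[R] Space R :=
  Finsupp.linearCombination R fun t =>
    shift R t.1 (zMulNormal a p k t.2.1 t.2.2) + (t.1 * p) • basisVec R (t.1 + 1) t.2.1 t.2.2

lemma mulZ_basisVec (i j l : ℕ) :
    mulZ a p k (basisVec R i j l) =
      shift R i (zMulNormal a p k j l) + (i * p) • basisVec R (i + 1) j l := by
  simp [mulZ, basisVec]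

lemma mulZ_pow_basisVec (n l : ℕ) :
    (mulZ a p k ^ n) (basisVec R 0 0 l) = basisVec R 0 0 (l + n) := by
  induction n with
  | zero => simp
  | succ n ih => simp [pow_succ', ih, mulZ_basisVec, zMulNormal, add_assoc]

lemma relations : Relations a p k (mulX R) (mulY a) (mulZ a p k) where
  y_mul_x := hom_ext fun i j l => by
    simp only [Module.End.mul_apply, LinearMap.add_apply, LinearMap.smul_apply, mulX,
      shift_basisVec, mulY_basisVec, map_add, map_smul]
    push_cast
    module
  z_mul_x := hom_ext fun i j l => by
    simp only [Module.End.mul_apply, LinearMap.add_apply, LinearMap.smul_apply, mulX,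
      shift_basisVec, mulZ_basisVec, map_add, map_smul, shift_shift]
    push_cast
    module
  z_mul_y := hom_ext fun i j l => by
    simp only [Module.End.mul_apply, LinearMap.add_apply, LinearMap.sub_apply,
      LinearMap.smul_apply, mulX, shift_basisVec, mulZ_basisVec, mulY_basisVec, map_add, map_sub,
      map_smul, shift_shift, zMulNormal, mulY_shift]
    push_cast
    simp only [add_comm, add_left_comm]
    module

end NormalForm

end

section Quotient

variable {A : Type*} [Ring A] [Algebra ℂ A] {a p k : ℂ} {x y z : A}

def liftOfRelations (h : Relations a p k x y z) : RingQuot (rel a p k) →ₐ[ℂ] A :=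
  RingQuot.liftAlgHom ℂ ⟨FreeAlgebra.lift ℂ ![x, y, z], by
    rintro _ _ ⟨hs, rfl⟩
    rcases hs with rfl | rfl | rfl
    · simp [X, h.y_mul_x]
    · simp [X, h.z_mul_x]
    · simp [X, h.z_mul_y]
      abel⟩

@[simp]
lemma liftOfRelations_mkAlgHom_X (h : Relations a p k x y z) (i : Fin 3) :
    liftOfRelations h (RingQuot.mkAlgHom ℂ (rel a p k) (X i)) = ![x, y, z] i := by
  simp [liftOfRelations, RingQuot.liftAlgHom_mkAlgHom_apply, X]

end Quotient

lemma relations_mkAlgHom (a p k : ℂ) :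
    Relations a p k (RingQuot.mkAlgHom ℂ (rel a p k) (X 0))
      (RingQuot.mkAlgHom ℂ (rel a p k) (X 1)) (RingQuot.mkAlgHom ℂ (rel a p k) (X 2)) := by
  have h : ∀ s ∈ S a p k, RingQuot.mkAlgHom ℂ (rel a p k) s = 0 := fun s hs => by
    simpa using RingQuot.mkAlgHom_rel ℂ (s := rel a p k) ⟨hs, rfl⟩
  simp only [S, Set.mem_insert_iff, Set.mem_singleton_iff, forall_eq_or_imp, forall_eq, map_sub,
    map_add, map_smul, map_mul] at h
  obtain ⟨h₁, h₂, h₃⟩ := h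
  exact ⟨by rw [← sub_eq_zero, ← h₁]; module, by rw [← sub_eq_zero, ← h₂]; module,
    by rw [← sub_eq_zero, ← h₃]; module⟩

open NormalForm in
theorem linearIndependent_mkAlgHom_monomial (a p k : ℂ) :
    LinearIndependent ℂ (fun t : ℕ × ℕ × ℕ =>
      RingQuot.mkAlgHom ℂ (rel a p k) (X 0 ^ t.1 * X 1 ^ t.2.1 * X 2 ^ t.2.2)) := by
  let φ := LinearMap.applyₗ (basisVec ℂ 0 0 0) ∘ₗ
    (liftOfRelations (relations a p k)).toLinearMap
  refine LinearIndependent.of_comp φ ?_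
  convert Finsupp.linearIndependent_single_one ℂ (ℕ × ℕ × ℕ) with ⟨i, j, l⟩
  change _ = basisVec ℂ i j l
  simp [φ, mulX_pow_basisVec, mulY_pow_basisVec, mulZ_pow_basisVec]

theorem adjoin_mkAlgHom_X_eq_top (a p k : ℂ) :
    Algebra.adjoin ℂ {RingQuot.mkAlgHom ℂ (rel a p k) (X 0),
      RingQuot.mkAlgHom ℂ (rel a p k) (X 1), RingQuot.mkAlgHom ℂ (rel a p k) (X 2)} = ⊤ := by
  set π := RingQuot.mkAlgHom ℂ (rel a p k)
  have hgen : {π (X 0), π (X 1), π (X 2)} = π '' Set.range (FreeAlgebra.ι ℂ) := by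
    ext
    simp [X, Fin.exists_fin_succ, eq_comm]
  rw [hgen, Algebra.adjoin_image, FreeAlgebra.adjoin_range_ι, Algebra.map_top,
    AlgHom.range_eq_top]
  exact RingQuot.mkAlgHom_surjective ℂ _

theorem span_mkAlgHom_monomial_eq_top (a p k : ℂ) :
    Submodule.span ℂ (Set.range (fun t : ℕ × ℕ × ℕ =>
      RingQuot.mkAlgHom ℂ (rel a p k) (X 0 ^ t.1 * X 1 ^ t.2.1 * X 2 ^ t.2.2))) = ⊤ := by
  have h := adjoin_le_monomialSpan (relations_mkAlgHom a p k)
  rw [adjoin_mkAlgHom_X_eq_top, Algebra.top_toSubmodule, top_le_iff] at h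
  simpa [monomialSpan] using h

end R16

/-- the images in `F/I` of the monomials `x₁^{a₁} x₂^{a₂} x₃^{a₃}` form a `ℂ`-basis. -/
theorem basis_R16_t_one (a p k : ℂ) :
    LinearIndependent ℂ (fun e : ℕ × ℕ × ℕ =>
      RingQuot.mkAlgHom ℂ (rel a p k) (X 0 ^ e.1 * X 1 ^ e.2.1 * X 2 ^ e.2.2)) ∧
    Submodule.span ℂ (Set.range (fun e : ℕ × ℕ × ℕ =>
      RingQuot.mkAlgHom ℂ (rel a p k) (X 0 ^ e.1 * X 1 ^ e.2.1 * X 2 ^ e.2.2))) = ⊤ :=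
  ⟨R16.linearIndependent_mkAlgHom_monomial a p k, R16.span_mkAlgHom_monomial_eq_top a p k⟩
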